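/- Consider the smallest equivalence relation ∼ on multi-operator monomials that is a congruence with respect to multiplication and application of each operator P_1,…,P_d and that identifies P_i(P_j(v)) with P_j(P_i(v)) for all 1 ≤ i < j ≤ d and all monomials v. Then every equivalence class of ∼ contains exactly one canonical monomial, namely exactly one monomial in which, along every maximal nested chain of unary operators, the operator indices are weakly increasing. -/
import Mathlib


namespace MultiOp

mutual
inductive Atom (d : ℕ) : Type where
  | star : Atom d
  | op : Fin d → Mon d → Atom d
inductive Mon (d : ℕ) : Type where
  | single : Atom d → Mon d
  | cons : Atom d → Mon d → Mon d
end

mutual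
def Atom.deg {d : ℕ} : Atom d → ℕ
  | .star => 1
  | .op _ v => v.deg
def Mon.deg {d : ℕ} : Mon d → ℕ
  | .single a => a.deg
  | .cons a v => a.deg + v.deg
end

mutual
def Atom.mult {d : ℕ} : Atom d → Fin d → ℕ
  | .star, _ => 0
  | .op i v, j => (if i = j then 1 else 0) + v.mult j
def Mon.mult {d : ℕ} : Mon d → Fin d → ℕ
  | .single a, j => a.mult j
  | .cons a v, j => a.mult j + v.mult j
end

noncomputable def a (d r : ℕ) (s : Fin d → ℕ) : ℕ :=
  Nat.card {v : Mon d // v.deg = r ∧ v.mult = s}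

noncomputable def b (d ℓ n : ℕ) : ℕ :=
  Nat.card {v : Mon d // ℓ * v.deg + 2 * (∑ i, v.mult i) = n}

noncomputable def A (d : ℕ) : MvPowerSeries (Option (Fin d)) ℚ :=
  fun e => (a d (e none) (fun i => e (some i)) : ℚ)

noncomputable def B (d ℓ : ℕ) : PowerSeries ℚ :=
  PowerSeries.mk fun n => (b d ℓ n : ℚ)

def narayana (n k : ℕ) : ℚ := (n.choose k * n.choose (k + 1) : ℚ) / n

/-- Concatenation (the associative multiplication) of monomials. -/
def Mon.mul {d : ℕ} : Mon d → Mon d → Mon d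
  | .single a, w => .cons a w
  | .cons a v, w => .cons a (v.mul w)

/-- Application of the unary operator `P i` to a monomial. -/
def Mon.P {d : ℕ} (i : Fin d) (v : Mon d) : Mon d := .single (.op i v)

/- Canonical monomials: along every maximal nested chain of unary operators the
operator indices are weakly increasing, i.e. a subword `P i (P j (⋯))` occurs only
when `i ≤ j`. -/
mutual
inductive AtomCanon : {d : ℕ} → Atom d → Prop where
  | star {d : ℕ} : AtomCanon (Atom.star : Atom d)
  | op {d : ℕ} (i : Fin d) (v : Mon d) : MonCanon v →
      (∀ (j : Fin d) (w : Mon d), v = Mon.single (Atom.op j w) → i ≤ j) →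
      AtomCanon (Atom.op i v)
inductive MonCanon : {d : ℕ} → Mon d → Prop where
  | single {d : ℕ} (a : Atom d) : AtomCanon a → MonCanon (Mon.single a)
  | cons {d : ℕ} (a : Atom d) (v : Mon d) : AtomCanon a → MonCanon v →
      MonCanon (Mon.cons a v)
end

/-- The smallest equivalence relation on monomials which is a congruence with respect to
multiplication and application of each unary operator, and which identifies
`P i (P j v)` with `P j (P i v)` for all `i < j`. -/
inductive Rel (d : ℕ) : Mon d → Mon d → Prop where
  | refl (v : Mon d) : Rel d v v
  | symm {v w : Mon d} : Rel d v w → Rel d w v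
  | trans {u v w : Mon d} : Rel d u v → Rel d v w → Rel d u w
  | mul_congr {v v' w w' : Mon d} : Rel d v v' → Rel d w w' →
      Rel d (v.mul w) (v'.mul w')
  | op_congr (i : Fin d) {v w : Mon d} : Rel d v w → Rel d (Mon.P i v) (Mon.P i w)
  | swap (i j : Fin d) (v : Mon d) : i < j →
      Rel d (Mon.P i (Mon.P j v)) (Mon.P j (Mon.P i v))

/-! ### Auxiliary development: normalization by insertion sort on nested chains -/

/-- Insert the operator `i` into the nested chain at the top of `v`. -/
def ins {d : ℕ} (i : Fin d) : Mon d → Mon d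
  | .single .star => .single (.op i (.single .star))
  | .single (.op j w) =>
      if i ≤ j then .single (.op i (.single (.op j w)))
      else .single (.op j (ins i w))
  | .cons a w => .single (.op i (.cons a w))

mutual
/-- Normal form of an atom (as a monomial). -/
def normA {d : ℕ} : Atom d → Mon d
  | .star => .single .star
  | .op i v => ins i (normM v)
/-- Normal form of a monomial. -/
def normM {d : ℕ} : Mon d → Mon d
  | .single a => normA a
  | .cons a w => (normA a).mul (normM w)
end

theorem ins_op {d : ℕ} (i j : Fin d) (w : Mon d) : ins i (.single (.op j w)) =
    (if i ≤ j then .single (.op i (.single (.op j w))) else .single (.op j (ins i w))) := rfl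

theorem normM_single {d : ℕ} (a : Atom d) : normM (.single a) = normA a := rfl

theorem normA_op {d : ℕ} (i : Fin d) (v : Mon d) : normA (.op i v) = ins i (normM v) := rfl

theorem Mon.mul_assoc {d : ℕ} : ∀ u v w : Mon d, (u.mul v).mul w = u.mul (v.mul w)
  | .single a, v, w => rfl
  | .cons a u', v, w => by simp [Mon.mul, Mon.mul_assoc u' v w]

theorem norm_mul {d : ℕ} : ∀ v w : Mon d, normM (v.mul w) = (normM v).mul (normM w)
  | .single a, w => rfl
  | .cons a v', w => by
      show normM (.cons a (v'.mul w)) = _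
      rw [normM, norm_mul v' w, normM, Mon.mul_assoc]

/-- `ins` always produces a single `op`-atom. -/
theorem ins_shape {d : ℕ} (i : Fin d) (v : Mon d) :
    ∀ m x, ins i v = .single (.op m x) → m = i ∨ ∃ y, v = .single (.op m y) := by
  cases v with
  | single a =>
    cases a with
    | star => intro m x h; rw [ins] at h; injection h with h; injection h with h1 _; exact Or.inl h1.symm
    | op j w =>
      intro m x h
      rw [ins] at h
      split at h
      · injection h with h; injection h with h1 _; exact Or.inl h1.symm
      · injection h with h; injection h with h1 _
        exact Or.inr ⟨w, by rw [h1]⟩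
  | cons a w =>
    intro m x h; rw [ins] at h; injection h with h; injection h with h1 _; exact Or.inl h1.symm

theorem ins_exists {d : ℕ} (i : Fin d) (v : Mon d) :
    ∃ m x, ins i v = .single (.op m x) := by
  cases v with
  | single a =>
    cases a with
    | star => exact ⟨i, _, rfl⟩
    | op j w =>
      rw [ins]
      split
      · exact ⟨i, _, rfl⟩
      · exact ⟨j, _, rfl⟩
  | cons a w => exact ⟨i, _, rfl⟩

/-- Insertions commute. -/
theorem ins_comm {d : ℕ} (i j : Fin d) : ∀ u : Mon d, ins i (ins j u) = ins j (ins i u)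
  | .single .star => by
      simp only [ins]
      split_ifs with h1 h2 h2
      · rw [le_antisymm h1 h2]
      · rfl
      · rfl
      · exact absurd (le_of_not_ge h1) h2
  | .cons a w => by
      simp only [ins]
      split_ifs with h1 h2 h2
      · rw [le_antisymm h1 h2]
      · rfl
      · rfl
      · exact absurd (le_of_not_ge h1) h2
  | .single (.op k w) => by
      by_cases hjk : j ≤ k
      · by_cases hik : i ≤ k
        · by_cases hij : i ≤ j
          · by_cases hji : j ≤ i
            · rw [le_antisymm hij hji]
            · simp only [ins, if_pos hjk, if_pos hik, if_pos hij, if_neg hji]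
          · have hji : j ≤ i := le_of_not_ge hij
            simp only [ins, if_pos hjk, if_pos hik, if_neg hij, if_pos hji]
        · have hij : ¬ i ≤ j := fun h => hik (h.trans hjk)
          have hji : j ≤ i := le_of_not_ge hij
          simp only [ins, if_pos hjk, if_neg hik, if_neg hij, if_pos hji]
      · by_cases hik : i ≤ k
        · have hji : ¬ j ≤ i := fun h => hjk (h.trans hik)
          have hij : i ≤ j := le_of_not_ge hji
          simp only [ins, if_neg hjk, if_pos hik, if_pos hij, if_neg hji]
        · simp only [ins, if_neg hjk, if_neg hik]
          rw [ins_comm i j w]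

/-- Normal forms are invariant under the congruence. -/
theorem norm_eq_of_rel {d : ℕ} {v w : Mon d} (h : Rel d v w) : normM v = normM w := by
  induction h with
  | refl v => rfl
  | symm _ ih => exact ih.symm
  | trans _ _ ih1 ih2 => exact ih1.trans ih2
  | mul_congr _ _ ih1 ih2 => rw [norm_mul, norm_mul, ih1, ih2]
  | op_congr i _ ih =>
      show normM (.single (.op i _)) = normM (.single (.op i _))
      rw [normM, normM, normA, normA, ih]
  | swap i j v hij =>
      show normM (.single (.op i (.single (.op j v)))) =
        normM (.single (.op j (.single (.op i v))))
      simp only [normM_single, normA_op]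
      rw [ins_comm]

/-- Every monomial is related to its normal form. -/
theorem rel_ins {d : ℕ} (i : Fin d) : ∀ w : Mon d, Rel d (Mon.P i w) (ins i w)
  | .single .star => by rw [ins]; exact Rel.refl _
  | .single (.op k x) => by
      rw [ins]
      split
      · exact Rel.refl _
      · rename_i hik
        have hki : k < i := lt_of_not_ge hik
        refine Rel.trans (Rel.symm (Rel.swap k i x hki)) ?_
        exact Rel.op_congr k (rel_ins i x)
  | .cons a w => by rw [ins]; exact Rel.refl _

mutual
theorem rel_normA {d : ℕ} : ∀ a : Atom d, Rel d (.single a) (normA a)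
  | .star => Rel.refl _
  | .op i v => by
      rw [normA]
      exact Rel.trans (Rel.op_congr i (rel_normM v)) (rel_ins i (normM v))
theorem rel_normM {d : ℕ} : ∀ v : Mon d, Rel d v (normM v)
  | .single a => rel_normA a
  | .cons a w => by
      rw [normM]
      exact Rel.mul_congr (rel_normA a) (rel_normM w)
end

theorem mul_canon {d : ℕ} : ∀ {v w : Mon d}, MonCanon v → MonCanon w →
    MonCanon (v.mul w)
  | .single a, w, hv, hw => by
      cases hv with
      | single _ ha => exact MonCanon.cons a w ha hw
  | .cons a v', w, hv, hw => by
      cases hv with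
      | cons _ _ ha hv' => exact MonCanon.cons a _ ha (mul_canon hv' hw)

/-- Insertion preserves canonicity. -/
theorem ins_canon {d : ℕ} (i : Fin d) : ∀ v : Mon d, MonCanon v → MonCanon (ins i v)
  | .single .star, hv => by
      rw [ins]
      refine MonCanon.single _ (AtomCanon.op i _ hv ?_)
      intro j w h; exact absurd h (by intro h; injection h with h; cases h)
  | .single (.op k x), hv => by
      have hx : MonCanon x := by
        cases hv with
        | single _ ha => cases ha with | op _ _ h _ => exact h
      have hle : ∀ (m : Fin d) (y : Mon d), x = .single (.op m y) → k ≤ m := by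
        cases hv with
        | single _ ha => cases ha with | op _ _ _ h => exact h
      rw [ins]
      split
      · rename_i hik
        refine MonCanon.single _ (AtomCanon.op i _ hv ?_)
        intro m y h
        injection h with h; injection h with h1 _
        exact h1 ▸ hik
      · rename_i hik
        have hki : k ≤ i := le_of_not_ge hik
        refine MonCanon.single _ (AtomCanon.op k _ (ins_canon i x hx) ?_)
        intro m y h
        rcases ins_shape i x m y h with hm | ⟨z, hz⟩
        · exact hm ▸ hki
        · exact hle m z hz
  | .cons a w, hv => by
      rw [ins]
      refine MonCanon.single _ (AtomCanon.op i _ hv ?_)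
      intro j y h; exact absurd h (by intro h; cases h)

mutual
theorem normA_canon {d : ℕ} : ∀ a : Atom d, MonCanon (normA a)
  | .star => MonCanon.single _ AtomCanon.star
  | .op i v => by rw [normA]; exact ins_canon i _ (normM_canon v)
theorem normM_canon {d : ℕ} : ∀ v : Mon d, MonCanon (normM v)
  | .single a => normA_canon a
  | .cons a w => by rw [normM]; exact mul_canon (normA_canon a) (normM_canon w)
end

theorem ins_of_canon {d : ℕ} (i : Fin d) : ∀ v : Mon d,
    (∀ (m : Fin d) (y : Mon d), v = .single (.op m y) → i ≤ m) →
    ins i v = .single (.op i v)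
  | .single .star, _ => rfl
  | .single (.op k x), h => by rw [ins, if_pos (h k x rfl)]
  | .cons a w, _ => rfl

mutual
theorem normA_fix {d : ℕ} : ∀ a : Atom d, AtomCanon a → normA a = .single a
  | .star, _ => rfl
  | .op i v, ha => by
      cases ha with
      | op _ _ hv hle =>
        rw [normA, normM_fix v hv, ins_of_canon i v hle]
theorem normM_fix {d : ℕ} : ∀ v : Mon d, MonCanon v → normM v = v
  | .single a, hv => by
      cases hv with
      | single _ ha => exact normA_fix a ha
  | .cons a w, hv => by
      cases hv with
      | cons _ _ ha hw =>
        rw [normM, normA_fix a ha, normM_fix w hw]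
        rfl
end

/-- Every equivalence class of the congruence generated by `P i (P j v) ∼ P j (P i v)`
(for `i < j`) contains exactly one canonical monomial, i.e. one monomial in which the
operator indices are weakly increasing along every maximal nested chain of unary
operators. -/
theorem exists_unique_canonical (d : ℕ) (hd : 1 ≤ d) (v : Mon d) :
    ∃! w : Mon d, MonCanon w ∧ Rel d v w := by
  refine ⟨normM v, ⟨normM_canon v, rel_normM v⟩, ?_⟩
  rintro y ⟨hy, hvy⟩
  have : normM v = normM y := norm_eq_of_rel hvy
  rw [this, normM_fix y hy]

end MultiOp
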